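/- For every m ≥ 2, in the algebra C_{A_m}(u) with u invertible in k, writing x₁ = g_{s₁} and x₂ = g_{s₂} (which are invertible, with g_s⁻¹ = g_s + (u⁻¹−1)e_s + (u⁻¹−1)e_s g_s), the following two identities hold: (i) x₁x₂x₁⁻¹ + x₁⁻¹x₂⁻¹x₁ + x₁x₂ + x₁⁻¹x₂⁻¹ + x₂x₁⁻¹ + x₂⁻¹x₁ = x₁x₂⁻¹x₁⁻¹ + x₁⁻¹x₂x₁ + x₁x₂⁻¹ + x₁⁻¹x₂ + x₂⁻¹x₁⁻¹ + x₂x₁; and (ii) x₁x₂⁻¹x₁ − x₂x₁⁻¹x₂ + u·(x₂⁻¹x₁x₂⁻¹ − x₁⁻¹x₂x₁⁻¹) = 0 (the specialization at {t₀,t₁} = {1,u} of Ishii's second relation). -/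

import Mathlib

open scoped Classical

noncomputable section

namespace CWpaper

variable {B : Type} {M : CoxeterMatrix B} {W : Type} [Group W] (cs : CoxeterSystem M W)
variable (k : Type) [CommRing k]

/-- The set of reflections of the Coxeter system, as a subtype. -/
abbrev Refl := {t : W // cs.IsReflection t}

/-- Index type for the generators of `C_W(u)`: `inl i` indexes `g` generators,
`inr t` indexes `e` generators. -/
abbrev Gen := B ⊕ Refl cs

/-- The free-algebra generator corresponding to `g_s`. -/
def gf (i : B) : FreeAlgebra k (Gen cs) := FreeAlgebra.ι k (Sum.inl i)

/-- The free-algebra generator corresponding to `e_t`. -/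
def ef (t : Refl cs) : FreeAlgebra k (Gen cs) := FreeAlgebra.ι k (Sum.inr t)

/-- A simple reflection, as a reflection. -/
def simpleR (i : B) : Refl cs := ⟨cs.simple i, cs.isReflection_simple i⟩

/-- Conjugate of a reflection by a group element. -/
def conjR (w : W) (t : Refl cs) : Refl cs := ⟨w * t.1 * w⁻¹, t.2.conj w⟩

/-- The defining relations of the algebra `C_W(u)`. -/
inductive CWrel (u : B → k) : FreeAlgebra k (Gen cs) → FreeAlgebra k (Gen cs) → Prop
  | braid (i j : B) (h : M i j ≠ 0) :
      CWrel u (((CoxeterSystem.alternatingWord i j (M i j)).map (gf cs k)).prod)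
              (((CoxeterSystem.alternatingWord j i (M i j)).map (gf cs k)).prod)
  | idem (t : Refl cs) : CWrel u (ef cs k t * ef cs k t) (ef cs k t)
  | comm (t₁ t₂ : Refl cs) : CWrel u (ef cs k t₁ * ef cs k t₂) (ef cs k t₂ * ef cs k t₁)
  | conj (t t₁ : Refl cs) :
      CWrel u (ef cs k t * ef cs k t₁) (ef cs k t * ef cs k (conjR cs t.1 t₁))
  | move (i : B) (t : Refl cs) :
      CWrel u (gf cs k i * ef cs k t) (ef cs k (conjR cs (cs.simple i) t) * gf cs k i)
  | quad (i : B) :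
      CWrel u (gf cs k i * gf cs k i)
        (1 + algebraMap k _ (u i - 1) * ef cs k (simpleR cs i) * (1 + gf cs k i))

variable (u : B → k)

/-- The algebra `C_W(u)`. -/
abbrev CW := RingQuot (CWrel cs k u)

/-- The generator `g_s` of `C_W(u)`. -/
def gCW (i : B) : CW cs k u := RingQuot.mkAlgHom k (CWrel cs k u) (gf cs k i)

/-- The generator `e_t` of `C_W(u)`. -/
def eCW (t : Refl cs) : CW cs k u := RingQuot.mkAlgHom k (CWrel cs k u) (ef cs k t)

theorem eCW_commute (t₁ t₂ : Refl cs) : Commute (eCW cs k u t₁) (eCW cs k u t₂) := by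
  have h := RingQuot.mkAlgHom_rel k (CWrel.comm (cs := cs) (k := k) (u := u) t₁ t₂)
  simp only [map_mul] at h
  exact h

/-- The product `e_J = ∏_{t ∈ J} e_t` for a finite set of reflections `J`. -/
def eJ (J : Finset (Refl cs)) : CW cs k u :=
  J.noncommProd (eCW cs k u) (fun t₁ _ t₂ _ _ => eCW_commute cs k u t₁ t₂)

/-- `gg : W → C_W(u)` is the family `(g_w)_{w ∈ W}` iff for every reduced word
`l` for `w`, `gg w` is the product of the `g_s`, `s ∈ l`. -/
def IsGFamily (gg : W → CW cs k u) : Prop :=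
  ∀ l : List B, cs.IsReduced l → gg (cs.wordProd l) = (l.map (gCW cs k u)).prod

end CWpaper

/-!
Write `c = u⁻¹ - 1` and `E = e₁ e₂`. The inverse of `x = g_s` is `x + c e_s (1 + x)`, and
conjugation by `x₁, x₂` permutes `e_{s₁}, e_{s₂}, e_{s₁s₂s₁}` while any product of two of these
is `E`. Expanding with these rules, the two sides of (i) differ by
`c² E (x₂x₁ - x₁x₂) + c² E (x₁x₂ - x₂x₁) = 0`, while
`x₁x₂⁻¹x₁ - x₂x₁⁻¹x₂ = c (u - 1) E (x₁ - x₂)` and `x₂⁻¹x₁x₂⁻¹ - x₁⁻¹x₂x₁⁻¹ = c² E (x₁ - x₂)`,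
so (ii) reduces to `c (u - 1) + u c² = c (u u⁻¹ - 1) = 0`.
-/

-- Lets `simp` use the relation `x * y = z` inside right-associated products.
theorem mul_mul_eq_of_mul_eq {S : Type*} [Semigroup S] {x y z : S} (h : x * y = z) (t : S) :
    x * (y * t) = z * t := by
  rw [← mul_assoc, h]

section RankTwo

variable {k A : Type*} [CommRing k] [Ring A] [Algebra k A]

theorem mul_eq_one_of_mul_self_eq (u : kˣ) {a e y : A} (he : e * e = e) (hae : a * e = e * a)
    (ha : a * a = 1 + ((u : k) - 1) • e + ((u : k) - 1) • (e * a))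
    (hy : y = a + ((u⁻¹ : kˣ) - 1 : k) • e + ((u⁻¹ : kˣ) - 1 : k) • (e * a)) :
    a * y = 1 ∧ y * a = 1 := by
  subst hy
  constructor <;>
  · simp only [mul_add, add_mul, mul_smul_comm, smul_mul_assoc, mul_assoc, ha, hae,
      mul_mul_eq_of_mul_eq hae, mul_mul_eq_of_mul_eq he, he, mul_one]
    match_scalars <;> first | ring1 | linear_combination u.mul_inv

/-- The relations of `C_{A₂}(u)`, with `q = u - 1`, between `a = g_{s₁}`, `b = g_{s₂}` and
`e = e_{s₁}`, `f = e_{s₂}`, `g = e_{s₁s₂s₁}`. -/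
structure A₂Relations (q : k) (a b e f g : A) : Prop where
  f_mul_e : f * e = e * f
  g_mul_e : g * e = e * f
  e_mul_g : e * g = e * f
  g_mul_f : g * f = e * f
  f_mul_g : f * g = e * f
  a_mul_e : a * e = e * a
  a_mul_f : a * f = g * a
  a_mul_g : a * g = f * a
  b_mul_e : b * e = g * b
  b_mul_f : b * f = f * b
  b_mul_g : b * g = e * b
  a_mul_a : a * a = 1 + q • e + q • (e * a)
  b_mul_b : b * b = 1 + q • f + q • (f * b)
  braid : b * a * b = a * b * a

namespace A₂Relations

variable {q : k} {a b e f g : A}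

theorem ishii_first (h : A₂Relations q a b e f g) (c : k) {y z : A}
    (hy : y = a + c • e + c • (e * a)) (hz : z = b + c • f + c • (f * b)) :
    a * b * y + y * z * a + a * b + y * z + b * y + z * a =
      a * z * y + y * b * a + a * z + y * b + z * y + b * a := by
  subst hy hz
  simp only [mul_mul_eq_of_mul_eq h.f_mul_e, mul_mul_eq_of_mul_eq h.g_mul_e,
    mul_mul_eq_of_mul_eq h.e_mul_g, mul_mul_eq_of_mul_eq h.g_mul_f,
    mul_mul_eq_of_mul_eq h.f_mul_g, mul_mul_eq_of_mul_eq h.a_mul_e,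
    mul_mul_eq_of_mul_eq h.a_mul_f, mul_mul_eq_of_mul_eq h.a_mul_g,
    mul_mul_eq_of_mul_eq h.b_mul_e, h.a_mul_e, h.a_mul_f, h.b_mul_e, h.f_mul_e,
    mul_add, add_mul, mul_smul_comm, smul_mul_assoc, mul_assoc, smul_add, smul_smul]
  match_scalars <;> ring1

theorem mul_inv_mul_sub_mul_inv_mul (h : A₂Relations q a b e f g) (c : k) {y z : A}
    (hy : y = a + c • e + c • (e * a)) (hz : z = b + c • f + c • (f * b)) :
    a * z * a - b * y * b = (c * q) • (e * f * (a - b)) := by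
  subst hy hz
  have hbab : b * (a * b) = a * (b * a) := by simp only [← mul_assoc, h.braid]
  simp only [mul_mul_eq_of_mul_eq h.g_mul_e, mul_mul_eq_of_mul_eq h.g_mul_f,
    mul_mul_eq_of_mul_eq h.a_mul_f, mul_mul_eq_of_mul_eq h.b_mul_e, hbab, h.a_mul_a, h.b_mul_b,
    h.a_mul_f, h.b_mul_e, h.g_mul_e, h.g_mul_f,
    mul_add, add_mul, mul_sub, mul_smul_comm, smul_mul_assoc, mul_assoc, smul_sub, mul_one,
    smul_add, smul_smul]
  match_scalars <;> ring1

theorem inv_mul_inv_sub_inv_mul_inv (h : A₂Relations q a b e f g) (c : k) {y z : A}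
    (hy : y = a + c • e + c • (e * a)) (hz : z = b + c • f + c • (f * b)) :
    z * a * z - y * b * y = c ^ 2 • (e * f * (a - b)) := by
  subst hy hz
  have hbab : b * (a * b) = a * (b * a) := by simp only [← mul_assoc, h.braid]
  simp only [mul_mul_eq_of_mul_eq h.f_mul_e, mul_mul_eq_of_mul_eq h.e_mul_g,
    mul_mul_eq_of_mul_eq h.f_mul_g, mul_mul_eq_of_mul_eq h.a_mul_f,
    mul_mul_eq_of_mul_eq h.a_mul_g, mul_mul_eq_of_mul_eq h.b_mul_e,
    mul_mul_eq_of_mul_eq h.b_mul_g, hbab, h.a_mul_f, h.b_mul_e,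
    mul_add, add_mul, mul_sub, mul_smul_comm, smul_mul_assoc, mul_assoc, smul_sub,
    smul_add, smul_smul]
  match_scalars <;> ring1

theorem ishii_second (u : kˣ) (h : A₂Relations ((u : k) - 1) a b e f g) {y z : A}
    (hy : y = a + ((u⁻¹ : kˣ) - 1 : k) • e + ((u⁻¹ : kˣ) - 1 : k) • (e * a))
    (hz : z = b + ((u⁻¹ : kˣ) - 1 : k) • f + ((u⁻¹ : kˣ) - 1 : k) • (f * b)) :
    a * z * a - b * y * b + (u : k) • (z * a * z - y * b * y) = 0 := by
  rw [h.mul_inv_mul_sub_mul_inv_mul _ hy hz, h.inv_mul_inv_sub_inv_mul_inv _ hy hz, smul_smul,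
    ← add_smul]
  convert zero_smul k (e * f * (a - b)) using 2
  linear_combination ((u⁻¹ : kˣ) - 1 : k) * u.mul_inv

end A₂Relations

end RankTwo

namespace CWpaper

variable {B : Type} {M : CoxeterMatrix B} {W : Type} [Group W] (cs : CoxeterSystem M W)

section Reflections

theorem simple_braid_of_eq_three {i j : B} (h : M i j = 3) :
    cs.simple j * cs.simple i * cs.simple j = cs.simple i * cs.simple j * cs.simple i := by
  have := cs.wordProd_braidWord_eq i j
  rw [CoxeterSystem.braidWord, CoxeterSystem.braidWord, M.symmetric j i, h] at this
  simpa [CoxeterSystem.alternatingWord, CoxeterSystem.wordProd, mul_assoc] using this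

theorem conjR_simple_simpleR_self (i : B) :
    conjR cs (cs.simple i) (simpleR cs i) = simpleR cs i :=
  Subtype.ext (by simp [conjR, simpleR, cs.inv_simple])

theorem conjR_simple_conjR_simple (i : B) (t : Refl cs) :
    conjR cs (cs.simple i) (conjR cs (cs.simple i) t) = t :=
  Subtype.ext (by simp [conjR, cs.inv_simple, mul_assoc, cs.simple_mul_simple_cancel_left])

theorem conjR_simple_simpleR_of_eq_three {i j : B} (h : M i j = 3) :
    conjR cs (cs.simple j) (simpleR cs i) = conjR cs (cs.simple i) (simpleR cs j) := by
  apply Subtype.ext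
  simp only [conjR, simpleR, cs.inv_simple]
  rw [simple_braid_of_eq_three cs h]

end Reflections

section Relations

variable (k : Type) [CommRing k] (u : B → k)

theorem eCW_mul_self (t : Refl cs) : eCW cs k u t * eCW cs k u t = eCW cs k u t := by
  simpa only [map_mul, eCW] using RingQuot.mkAlgHom_rel k (CWrel.idem (u := u) t)

theorem eCW_mul_eCW_conjR (t t₁ : Refl cs) :
    eCW cs k u t * eCW cs k u t₁ = eCW cs k u t * eCW cs k u (conjR cs t.1 t₁) := by
  simpa only [map_mul, eCW] using RingQuot.mkAlgHom_rel k (CWrel.conj (u := u) t t₁)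

theorem gCW_mul_eCW (i : B) (t : Refl cs) :
    gCW cs k u i * eCW cs k u t = eCW cs k u (conjR cs (cs.simple i) t) * gCW cs k u i := by
  simpa only [map_mul, eCW, gCW] using RingQuot.mkAlgHom_rel k (CWrel.move (u := u) i t)

theorem gCW_mul_self (i : B) :
    gCW cs k u i * gCW cs k u i = 1 + (u i - 1) • eCW cs k u (simpleR cs i) +
      (u i - 1) • (eCW cs k u (simpleR cs i) * gCW cs k u i) := by
  have h := RingQuot.mkAlgHom_rel k (CWrel.quad (cs := cs) (u := u) i)
  simp only [map_add, map_mul, map_one, AlgHom.commutes] at h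
  refine h.trans ?_
  rw [Algebra.smul_def, Algebra.smul_def, mul_add, mul_one, ← add_assoc, mul_assoc]
  rfl

theorem gCW_braid_of_eq_three {i j : B} (h : M i j = 3) :
    gCW cs k u j * gCW cs k u i * gCW cs k u j = gCW cs k u i * gCW cs k u j * gCW cs k u i := by
  have := RingQuot.mkAlgHom_rel k (CWrel.braid (cs := cs) (u := u) i j (by omega))
  rw [h] at this
  simpa [CoxeterSystem.alternatingWord, gCW, mul_assoc] using this

theorem a₂Relations_of_eq_three {i j : B} (h : M i j = 3) (hu : u j = u i) :
    A₂Relations (u i - 1) (gCW cs k u i) (gCW cs k u j) (eCW cs k u (simpleR cs i))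
      (eCW cs k u (simpleR cs j)) (eCW cs k u (conjR cs (cs.simple i) (simpleR cs j))) := by
  have hji := conjR_simple_simpleR_of_eq_three cs h
  have hcomm := fun t₁ t₂ => (eCW_commute cs k u t₁ t₂).eq
  have e_mul_g : eCW cs k u (simpleR cs i) * eCW cs k u (conjR cs (cs.simple i) (simpleR cs j)) =
      eCW cs k u (simpleR cs i) * eCW cs k u (simpleR cs j) := by
    rw [eCW_mul_eCW_conjR, simpleR, conjR_simple_conjR_simple]
  have f_mul_g : eCW cs k u (simpleR cs j) * eCW cs k u (conjR cs (cs.simple i) (simpleR cs j)) =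
      eCW cs k u (simpleR cs i) * eCW cs k u (simpleR cs j) := by
    rw [eCW_mul_eCW_conjR, ← hji, simpleR, conjR_simple_conjR_simple, hcomm]
  exact
    { f_mul_e := hcomm _ _
      g_mul_e := by rw [hcomm, e_mul_g]
      e_mul_g := e_mul_g
      g_mul_f := by rw [hcomm, f_mul_g]
      f_mul_g := f_mul_g
      a_mul_e := by rw [gCW_mul_eCW, conjR_simple_simpleR_self]
      a_mul_f := gCW_mul_eCW ..
      a_mul_g := by rw [gCW_mul_eCW, conjR_simple_conjR_simple]
      b_mul_e := by rw [gCW_mul_eCW, hji]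
      b_mul_f := by rw [gCW_mul_eCW, conjR_simple_simpleR_self]
      b_mul_g := by rw [gCW_mul_eCW, ← hji, conjR_simple_conjR_simple]
      a_mul_a := gCW_mul_self cs k u i
      b_mul_b := by rw [gCW_mul_self, hu]
      braid := gCW_braid_of_eq_three cs k u h }

end Relations

/-- **Statement 16.** In `C_{A_m}(u)` (`m ≥ 2`, `u` invertible), with `x₁ = g_{s₁}`,
`x₂ = g_{s₂}` (invertible with inverse `g + (u⁻¹−1)e + (u⁻¹−1)eg`), Ishii's two relations
hold: the Links–Gould-type relation (i), and (ii)
`x₁x₂⁻¹x₁ − x₂x₁⁻¹x₂ + u(x₂⁻¹x₁x₂⁻¹ − x₁⁻¹x₂x₁⁻¹) = 0`. -/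
theorem statement16 (m : ℕ) (hm : 2 ≤ m) {W : Type} [Group W]
    (cs : CoxeterSystem (CoxeterMatrix.Aₙ m) W) (k : Type) [CommRing k] (u : kˣ)
    (x₁ x₂ e₁ e₂ y₁ y₂ : CW cs k fun _ => (u : k))
    (hx₁ : x₁ = gCW cs k (fun _ => (u : k)) ⟨0, by omega⟩)
    (hx₂ : x₂ = gCW cs k (fun _ => (u : k)) ⟨1, by omega⟩)
    (he₁ : e₁ = eCW cs k (fun _ => (u : k)) (simpleR cs ⟨0, by omega⟩))
    (he₂ : e₂ = eCW cs k (fun _ => (u : k)) (simpleR cs ⟨1, by omega⟩))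
    (hy₁ : y₁ = x₁ + (((u⁻¹ : kˣ) : k) - 1) • e₁ + (((u⁻¹ : kˣ) : k) - 1) • (e₁ * x₁))
    (hy₂ : y₂ = x₂ + (((u⁻¹ : kˣ) : k) - 1) • e₂ + (((u⁻¹ : kˣ) : k) - 1) • (e₂ * x₂)) :
    x₁ * y₁ = 1 ∧ y₁ * x₁ = 1 ∧ x₂ * y₂ = 1 ∧ y₂ * x₂ = 1 ∧
    (x₁ * x₂ * y₁ + y₁ * y₂ * x₁ + x₁ * x₂ + y₁ * y₂ + x₂ * y₁ + y₂ * x₁ =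
      x₁ * y₂ * y₁ + y₁ * x₂ * x₁ + x₁ * y₂ + y₁ * x₂ + y₂ * y₁ + x₂ * x₁) ∧
    (x₁ * y₂ * x₁ - x₂ * y₁ * x₂ + (u : k) • (y₂ * x₁ * y₂ - y₁ * x₂ * y₁) = 0) := by
  subst hx₁ hx₂ he₁ he₂
  have h3 : CoxeterMatrix.A m ⟨0, by omega⟩ ⟨1, by omega⟩ = 3 := by simp [CoxeterMatrix.A]
  have h := a₂Relations_of_eq_three cs k (fun _ => (u : k)) h3 rfl
  obtain ⟨hxy₁, hyx₁⟩ := mul_eq_one_of_mul_self_eq u (eCW_mul_self ..) h.a_mul_e h.a_mul_a hy₁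
  obtain ⟨hxy₂, hyx₂⟩ := mul_eq_one_of_mul_self_eq u (eCW_mul_self ..) h.b_mul_f h.b_mul_b hy₂
  exact ⟨hxy₁, hyx₁, hxy₂, hyx₂, h.ishii_first _ hy₁ hy₂, h.ishii_second u hy₁ hy₂⟩

end CWpaper
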